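/- arXiv:2106.11626 — 2 statements merged into one kernel-verified Lean document; each statement's English description precedes it below -/
import Mathlib

section
/- Let k ≥ 2 and let W₀, …, W_{k−1} be closed half-spaces in ℝ³, with boundary planes Π₀, …, Π_{k−1}, such that 0 lies in the interior of W₀ ∩ ⋯ ∩ W_{k−1} and, for every i (indices mod k), Πᵢ ≠ Π_{i+1} and Πᵢ ∩ Π_{i+1} ≠ ∅. Then it is impossible that for every i (indices mod k) the orthogonal projection of 0 onto Π_{i+1} lies outside the interior of Wᵢ. (This is the paper's remark that the edges around a vertex of a convex polyhedron cannot all be crossed edges oriented cyclically in one direction.) -/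
open scoped RealInnerProductSpace

/-!
Write `dᵢ = cᵢ / ‖nᵢ‖` for the distance from the origin to the plane `Bᵢ`; it is positive since
`0` is interior. The projection of `0` onto `B_{i+1}` is `(c_{i+1} / ‖n_{i+1}‖²) • n_{i+1}`, and
by Cauchy–Schwarz it lies outside the open half-space `⟪nᵢ, x⟫ < cᵢ` only if `dᵢ ≤ d_{i+1}`, with
equality only when the unit normals and the distances of the two planes agree, i.e. when
`Bᵢ = B_{i+1}`. So the distances would increase strictly all the way around the cycle.
-/

theorem not_forall_lt_apply_add_one_mod {α : Type*} [LinearOrder α] {k : ℕ} (hk : 0 < k)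
    (f : ℕ → α) : ¬ ∀ i < k, f i < f ((i + 1) % k) := by
  intro h
  obtain ⟨i, hi, hmax⟩ := (Finset.range k).exists_max_image f ⟨0, Finset.mem_range.2 hk⟩
  exact (h i (Finset.mem_range.1 hi)).not_ge
    (hmax _ (Finset.mem_range.2 (Nat.mod_lt _ hk)))

section InnerProductSpace

variable {E : Type*} [NormedAddCommGroup E] [InnerProductSpace ℝ E]

theorem interior_setOf_inner_le {n : E} (hn : n ≠ 0) (c : ℝ) :
    interior {x | ⟪n, x⟫ ≤ c} = {x | ⟪n, x⟫ < c} := by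
  have hf : innerSL ℝ n ≠ 0 := by rwa [← norm_ne_zero_iff, innerSL_apply_norm, norm_ne_zero_iff]
  have := ((innerSL ℝ n).isOpenMap_of_ne_zero hf).preimage_interior_eq_interior_preimage
    (innerSL ℝ n).continuous (Set.Iic c)
  rw [interior_Iic] at this
  exact this.symm

theorem setOf_inner_eq_eq_inv_norm_smul {n : E} (hn : n ≠ 0) (c : ℝ) :
    {x | ⟪n, x⟫ = c} = {x | ⟪‖n‖⁻¹ • n, x⟫ = c / ‖n‖} := by
  ext x
  simp only [Set.mem_ofPred_eq, real_inner_smul_left, inv_mul_eq_div]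
  exact (div_left_inj' (norm_ne_zero_iff.2 hn)).symm

theorem eq_div_norm_sq_smul_of_forall_inner_sub_eq_zero {m p : E} {c : ℝ} (hm : m ≠ 0)
    (hp : ⟪m, p⟫ = c) (hperp : ∀ x, ⟪m, x⟫ = c → ⟪p, x - p⟫ = 0) :
    p = (c / ‖m‖ ^ 2) • m := by
  set q := (c / ‖m‖ ^ 2) • m
  have hq : ⟪m, q⟫ = c := by
    simp only [q, real_inner_smul_right, real_inner_self_eq_norm_sq]
    field_simp
  have hpq : ⟪p, q - p⟫ = 0 := hperp q hq
  have hqq : ⟪q, q - p⟫ = 0 := by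
    simp only [q, real_inner_smul_left, inner_sub_right, hq, hp, sub_self]
  have : ⟪q - p, q - p⟫ = 0 := by rw [inner_sub_left, hpq, hqq, sub_zero]
  exact (sub_eq_zero.1 (inner_self_eq_zero.1 this)).symm

theorem div_norm_lt_of_le_inner_div_norm_sq_smul {n m : E} {c c' : ℝ} (hn : n ≠ 0) (hm : m ≠ 0)
    (hc' : 0 < c') (hne : {x | ⟪n, x⟫ = c} ≠ {x | ⟪m, x⟫ = c'})
    (hle : c ≤ ⟪n, (c' / ‖m‖ ^ 2) • m⟫) : c / ‖n‖ < c' / ‖m‖ := by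
  have hn' : 0 < ‖n‖ := norm_pos_iff.2 hn
  have hm' : 0 < ‖m‖ := norm_pos_iff.2 hm
  rw [real_inner_smul_right] at hle
  have hcs : ⟪n, m⟫ ≤ ‖n‖ * ‖m‖ := real_inner_le_norm n m
  have hdist : c ≤ c' / ‖m‖ * ‖n‖ := calc
    c ≤ c' / ‖m‖ ^ 2 * ⟪n, m⟫ := hle
    _ ≤ c' / ‖m‖ ^ 2 * (‖n‖ * ‖m‖) := by gcongr
    _ = c' / ‖m‖ * ‖n‖ := by field_simp
  refine (div_le_of_le_mul₀ hn'.le (by positivity) hdist).lt_of_ne fun heq => hne ?_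
  have hpar : ⟪n, m⟫ = ‖n‖ * ‖m‖ := by
    rw [div_eq_iff hn'.ne'] at heq
    have : c' / ‖m‖ ^ 2 * (‖n‖ * ‖m‖) ≤ c' / ‖m‖ ^ 2 * ⟪n, m⟫ := by
      convert hle using 1
      rw [heq]
      field_simp
    exact hcs.antisymm (le_of_mul_le_mul_left this (by positivity))
  have hunit : ‖n‖⁻¹ • n = ‖m‖⁻¹ • m := by
    have h := inner_eq_norm_mul_iff_real.1 hpar
    calc ‖n‖⁻¹ • n = (‖n‖⁻¹ * ‖m‖⁻¹) • (‖m‖ • n) := by rw [smul_smul]; congr 1; field_simp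
      _ = (‖n‖⁻¹ * ‖m‖⁻¹) • (‖n‖ • m) := by rw [h]
      _ = ‖m‖⁻¹ • m := by rw [smul_smul]; congr 1; field_simp
  rw [setOf_inner_eq_eq_inv_norm_smul hn, setOf_inner_eq_eq_inv_norm_smul hm, hunit, heq]

end InnerProductSpace

theorem not_all_edges_cyclically_crossed_general
    (k : ℕ) (hk : 2 ≤ k)
    (n : ℕ → EuclideanSpace ℝ (Fin 3)) (c : ℕ → ℝ)
    (hn : ∀ i < k, n i ≠ 0)
    (W B : ℕ → Set (EuclideanSpace ℝ (Fin 3)))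
    (hW : ∀ i < k, W i = {x | ⟪n i, x⟫ ≤ c i})
    (hB : ∀ i < k, B i = {x | ⟪n i, x⟫ = c i})
    (h0 : (0 : EuclideanSpace ℝ (Fin 3)) ∈ interior (⋂ i ∈ Finset.range k, W i))
    (hne : ∀ i < k, B i ≠ B ((i + 1) % k))
    -- `p i` is the orthogonal projection of `0` onto `B ((i+1) % k)`
    (p : ℕ → EuclideanSpace ℝ (Fin 3))
    (hp : ∀ i < k, p i ∈ B ((i + 1) % k))
    (hperp : ∀ i < k, ∀ x ∈ B ((i + 1) % k),
      ⟪(0 : EuclideanSpace ℝ (Fin 3)) - p i, x - p i⟫ = 0) :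
    ¬ (∀ i < k, p i ∉ interior (W i)) := by
  intro hcrossed
  have hc : ∀ i < k, 0 < c i := fun i hi => by
    have h0i := interior_mono (Set.biInter_subset_of_mem (Finset.mem_range.2 hi)) h0
    simpa [hW i hi, interior_setOf_inner_le (hn i hi)] using h0i
  refine not_forall_lt_apply_add_one_mod (show 0 < k by omega) (fun i => c i / ‖n i‖) fun i hi => ?_
  have hj : (i + 1) % k < k := Nat.mod_lt _ (show 0 < k by omega)
  have hproj : p i = (c ((i + 1) % k) / ‖n ((i + 1) % k)‖ ^ 2) • n ((i + 1) % k) := by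
    refine eq_div_norm_sq_smul_of_forall_inner_sub_eq_zero (hn _ hj)
      (by simpa [hB _ hj] using hp i hi) fun x hx => ?_
    simpa [zero_sub, inner_neg_left] using hperp i hi x (by simpa [hB _ hj] using hx)
  have hle : c i ≤ ⟪n i, p i⟫ := by
    simpa [hW i hi, interior_setOf_inner_le (hn i hi)] using hcrossed i hi
  refine div_norm_lt_of_le_inner_div_norm_sq_smul (hn i hi) (hn _ hj) (hc _ hj) ?_ (hproj ▸ hle)
  simpa [hB i hi, hB _ hj] using hne i hi

/-- given `k ≥ 2` closed half-spaces `W 0, …, W (k-1)` in `ℝ³` with boundary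
planes `B i`, with `0` in the interior of their intersection and consecutive boundary
planes (indices mod `k`) distinct and meeting, it is impossible that for every `i` the
orthogonal projection `p i` of `0` onto `B ((i+1) % k)` lies outside the interior of
`W i`. -/
theorem not_all_edges_cyclically_crossed
    (k : ℕ) (hk : 2 ≤ k)
    (n : ℕ → EuclideanSpace ℝ (Fin 3)) (c : ℕ → ℝ)
    (hn : ∀ i < k, n i ≠ 0)
    (W B : ℕ → Set (EuclideanSpace ℝ (Fin 3)))
    (hW : ∀ i < k, W i = {x | ⟪n i, x⟫ ≤ c i})
    (hB : ∀ i < k, B i = {x | ⟪n i, x⟫ = c i})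
    (h0 : (0 : EuclideanSpace ℝ (Fin 3)) ∈ interior (⋂ i ∈ Finset.range k, W i))
    (hne : ∀ i < k, B i ≠ B ((i + 1) % k))
    (hmeet : ∀ i < k, (B i ∩ B ((i + 1) % k)).Nonempty)
    -- `p i` is the orthogonal projection of `0` onto `B ((i+1) % k)`
    (p : ℕ → EuclideanSpace ℝ (Fin 3))
    (hp : ∀ i < k, p i ∈ B ((i + 1) % k))
    (hperp : ∀ i < k, ∀ x ∈ B ((i + 1) % k),
      ⟪(0 : EuclideanSpace ℝ (Fin 3)) - p i, x - p i⟫ = 0) :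
    ¬ (∀ i < k, p i ∉ interior (W i)) :=
  not_all_edges_cyclically_crossed_general k hk n c hn W B hW hB h0 hne p hp hperp
end

section
/- Let W₁ and W₂ be closed half-spaces in ℝ³ whose boundary planes Π₁ and Π₂ are distinct and intersect in a line L, with 0 in the interior of W₁ ∩ W₂, and set Aᵢ = Πᵢ ∩ W₃₋ᵢ. Assume the crossed-edge condition: the orthogonal projection o₁ of 0 onto Π₁ satisfies o₁ ∉ int W₂ and o₁ ∉ L. Let q ∈ L and set v* = (q − o₁)/‖q − o₁‖. Then there exists ε > 0 with q + t·v* ∈ A₁ for all t ∈ [0, ε], ⟪q, v*⟫ = ‖q − o₁‖ > 0, and every unit vector v ≠ v* for which there exists ε > 0 with q + t·v ∈ A₁ ∪ A₂ for all t ∈ [0, ε] satisfies ⟪q, v⟫ < ⟪q, v*⟫. (This establishes that at a point of a crossed edge the unique direction of steepest ascent of the radial distance function points into the face A₁, in the direction of the in-face gradient q − o₁.) -/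
open scoped RealInnerProductSpace
open Filter Topology

/-!
Write `w = q - o₁`. Since `0 ∈ int W₁` we have `c₁ > 0`, and `o₁ = (c₁ / ‖n₁‖²) • n₁` is a
positive multiple of the outer normal `n₁`. Hence `⟪q, v⟫ = ⟪w, v⟫ + ⟪o₁, v⟫` with
`⟪o₁, v⟫ ≤ 0` for every direction `v` that does not leave `W₁`, while `⟪w, v⟫ < ‖w‖` for unit
`v ≠ w / ‖w‖` by strict Cauchy–Schwarz. The direction `w / ‖w‖` itself lies in `Π₁` and, by
the crossed-edge condition `⟪n₂, o₁⟫ ≥ c₂`, points into `W₂`, so it stays in `A₁`.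
-/

section

variable {E : Type*} [NormedAddCommGroup E] [InnerProductSpace ℝ E]

theorem pos_of_zero_mem_interior_setOf_inner_le {n : E} {c : ℝ} (hn : n ≠ 0)
    (h : (0 : E) ∈ interior {x | ⟪n, x⟫ ≤ c}) : 0 < c := by
  have hlim : Tendsto (fun t : ℝ => t • n) (𝓝[>] 0) (𝓝 0) := by
    have hcont : Continuous fun t : ℝ => t • n := by fun_prop
    simpa using (hcont.tendsto 0).mono_left nhdsWithin_le_nhds
  obtain ⟨t, ht, ht_pos⟩ :=
    ((hlim.eventually (mem_interior_iff_mem_nhds.mp h)).and self_mem_nhdsWithin).exists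
  have hpos : 0 < t * ‖n‖ ^ 2 := mul_pos ht_pos (by positivity)
  simp only [real_inner_smul_right, real_inner_self_eq_norm_sq] at ht
  linarith

theorem le_inner_of_notMem_interior_setOf_inner_le {n x : E} {c : ℝ}
    (h : x ∉ interior {y | ⟪n, y⟫ ≤ c}) : c ≤ ⟪n, x⟫ := by
  contrapose! h
  exact interior_maximal (fun y (hy : ⟪n, y⟫ < c) => hy.le)
    (isOpen_lt (f := fun y => ⟪n, y⟫) (by fun_prop) continuous_const) h

theorem eq_div_norm_sq_smul_of_forall_inner_sub_eq_zero_s11 {n o : E} {c : ℝ} (hn : n ≠ 0)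
    (ho : ⟪n, o⟫ = c) (hperp : ∀ x, ⟪n, x⟫ = c → ⟪o, x - o⟫ = 0) :
    o = (c / ‖n‖ ^ 2) • n := by
  set p := (c / ‖n‖ ^ 2) • n
  have hnp : ⟪n, p⟫ = c := by
    have : ‖n‖ ≠ 0 := norm_ne_zero_iff.mpr hn
    rw [real_inner_smul_right, real_inner_self_eq_norm_sq]
    field_simp
  have hp : ⟪p, p - o⟫ = 0 := by
    rw [real_inner_smul_left, inner_sub_right, hnp, ho, sub_self, mul_zero]
  have hpo : ⟪p - o, p - o⟫ = 0 := by
    rw [inner_sub_left, hp, hperp p hnp, sub_zero]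
  exact (sub_eq_zero.mp (inner_self_eq_zero.mp hpo)).symm

theorem inner_nonpos_of_inner_add_smul_le {n q v : E} {c ε : ℝ}
    (hq : ⟪n, q⟫ = c) (hε : 0 < ε) (h : ⟪n, q + ε • v⟫ ≤ c) : ⟪n, v⟫ ≤ 0 := by
  rw [inner_add_right, real_inner_smul_right, hq] at h
  exact nonpos_of_mul_nonpos_right (by linarith) hε

theorem inner_add_smul_le_of_inner_nonpos {n q d : E} {c t : ℝ}
    (hq : ⟪n, q⟫ ≤ c) (hd : ⟪n, d⟫ ≤ 0) (ht : 0 ≤ t) : ⟪n, q + t • d⟫ ≤ c := by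
  rw [inner_add_right, real_inner_smul_right]
  linarith [mul_nonpos_of_nonneg_of_nonpos ht hd]

theorem inner_lt_norm_of_ne_inv_norm_smul {w v : E} (hv : ‖v‖ = 1)
    (hne : v ≠ ‖w‖⁻¹ • w) (hw : w ≠ 0) : ⟪w, v⟫ < ‖w‖ := by
  have hcs : ⟪w, v⟫ < ‖w‖ * ‖v‖ := by
    refine inner_lt_norm_mul_iff_real.mpr fun h => hne ?_
    rw [hv, one_smul] at h
    rw [eq_inv_smul_iff₀ (norm_ne_zero_iff.mpr hw), ← h]
  rwa [hv, mul_one] at hcs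

end

theorem crossed_edge_steepest_ascent_general
    (n₁ n₂ : EuclideanSpace ℝ (Fin 3)) (c₁ c₂ : ℝ) (hn₁ : n₁ ≠ 0)
    (W₁ W₂ B₁ B₂ A₁ A₂ : Set (EuclideanSpace ℝ (Fin 3)))
    (hW₁ : W₁ = {x | ⟪n₁, x⟫ ≤ c₁}) (hW₂ : W₂ = {x | ⟪n₂, x⟫ ≤ c₂})
    (hB₁ : B₁ = {x | ⟪n₁, x⟫ = c₁}) (hB₂ : B₂ = {x | ⟪n₂, x⟫ = c₂})
    (hA₁ : A₁ = B₁ ∩ W₂) (hA₂ : A₂ = B₂ ∩ W₁)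
    (h0 : (0 : EuclideanSpace ℝ (Fin 3)) ∈ interior (W₁ ∩ W₂))
    -- `o₁` is the orthogonal projection of `0` onto `B₁`
    (o₁ : EuclideanSpace ℝ (Fin 3)) (ho₁ : o₁ ∈ B₁)
    (hperp₁ : ∀ x ∈ B₁, ⟪(0 : EuclideanSpace ℝ (Fin 3)) - o₁, x - o₁⟫ = 0)
    -- the crossed-edge condition
    (hcross : o₁ ∉ interior W₂) (ho₁L : o₁ ∉ B₁ ∩ B₂)
    (q : EuclideanSpace ℝ (Fin 3)) (hq : q ∈ B₁ ∩ B₂)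
    (v' : EuclideanSpace ℝ (Fin 3)) (hv' : v' = ‖q - o₁‖⁻¹ • (q - o₁)) :
    (∃ ε > (0 : ℝ), ∀ t ∈ Set.Icc (0 : ℝ) ε, q + t • v' ∈ A₁) ∧
    ⟪q, v'⟫ = ‖q - o₁‖ ∧ 0 < ‖q - o₁‖ ∧
    (∀ v : EuclideanSpace ℝ (Fin 3), ‖v‖ = 1 → v ≠ v' →
      (∃ ε > (0 : ℝ), ∀ t ∈ Set.Icc (0 : ℝ) ε, q + t • v ∈ A₁ ∪ A₂) →
      ⟪q, v⟫ < ⟪q, v'⟫) := by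
  subst hW₁ hW₂ hB₁ hB₂ hA₁ hA₂ hv'
  obtain ⟨hq₁ : ⟪n₁, q⟫ = c₁, hq₂ : ⟪n₂, q⟫ = c₂⟩ := hq
  have hc₁ : 0 < c₁ :=
    pos_of_zero_mem_interior_setOf_inner_le hn₁ (interior_mono Set.inter_subset_left h0)
  have ho₁_eq : o₁ = (c₁ / ‖n₁‖ ^ 2) • n₁ :=
    eq_div_norm_sq_smul_of_forall_inner_sub_eq_zero_s11 hn₁ ho₁ fun x hx => by
      simpa using hperp₁ x hx
  have hc₂ : c₂ ≤ ⟪n₂, o₁⟫ := le_inner_of_notMem_interior_setOf_inner_le hcross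
  set w := q - o₁
  have hw₀ : w ≠ 0 := fun h => ho₁L ⟨ho₁, (sub_eq_zero.mp h) ▸ hq₂⟩
  have hn₁w : ⟪n₁, w⟫ = 0 := by rw [inner_sub_right, hq₁, ho₁, sub_self]
  have hn₂w : ⟪n₂, w⟫ ≤ 0 := by rw [inner_sub_right, hq₂]; linarith
  have hq_inner (u : EuclideanSpace ℝ (Fin 3)) :
      ⟪q, u⟫ = ⟪w, u⟫ + c₁ / ‖n₁‖ ^ 2 * ⟪n₁, u⟫ := by
    rw [← real_inner_smul_left, ← ho₁_eq, ← inner_add_left, sub_add_cancel]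
  have hqv' : ⟪q, ‖w‖⁻¹ • w⟫ = ‖w‖ := by
    have : ‖w‖ ≠ 0 := norm_ne_zero_iff.mpr hw₀
    rw [hq_inner, real_inner_smul_right, real_inner_smul_right, hn₁w,
      real_inner_self_eq_norm_sq]
    simp only [mul_zero, add_zero]
    field_simp
  refine ⟨⟨1, one_pos, fun t ht => ⟨?_, ?_⟩⟩, hqv', norm_pos_iff.mpr hw₀, ?_⟩
  · show ⟪n₁, _⟫ = c₁
    simp [inner_add_right, real_inner_smul_right, hn₁w, hq₁]
  · refine inner_add_smul_le_of_inner_nonpos hq₂.le ?_ ht.1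
    rw [real_inner_smul_right]
    exact mul_nonpos_of_nonneg_of_nonpos (by positivity) hn₂w
  · rintro v hv hne ⟨ε, hε, hmem⟩
    have hn₁v : ⟪n₁, v⟫ ≤ 0 := by
      refine inner_nonpos_of_inner_add_smul_le hq₁ hε ?_
      rcases hmem ε ⟨hε.le, le_rfl⟩ with h | h
      exacts [h.1.le, h.2]
    calc ⟪q, v⟫ = ⟪w, v⟫ + c₁ / ‖n₁‖ ^ 2 * ⟪n₁, v⟫ := hq_inner v
      _ < ‖w‖ + 0 := add_lt_add_of_lt_of_le (inner_lt_norm_of_ne_inv_norm_smul hv hne hw₀)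
          (mul_nonpos_of_nonneg_of_nonpos (by positivity) hn₁v)
      _ = ⟪q, ‖w‖⁻¹ • w⟫ := by rw [add_zero, hqv']

/-- at a point `q` of a crossed edge (crossed from the `A₂` side to the `A₁`
side), the unique direction of steepest ascent of the radial distance function points into
the face `A₁`, in the direction of the in-face gradient `q - o₁`. -/
theorem crossed_edge_steepest_ascent
    (n₁ n₂ : EuclideanSpace ℝ (Fin 3)) (c₁ c₂ : ℝ) (hn₁ : n₁ ≠ 0) (hn₂ : n₂ ≠ 0)
    (W₁ W₂ B₁ B₂ A₁ A₂ : Set (EuclideanSpace ℝ (Fin 3)))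
    (hW₁ : W₁ = {x | ⟪n₁, x⟫ ≤ c₁}) (hW₂ : W₂ = {x | ⟪n₂, x⟫ ≤ c₂})
    (hB₁ : B₁ = {x | ⟪n₁, x⟫ = c₁}) (hB₂ : B₂ = {x | ⟪n₂, x⟫ = c₂})
    (hA₁ : A₁ = B₁ ∩ W₂) (hA₂ : A₂ = B₂ ∩ W₁)
    (hne : B₁ ≠ B₂) (hmeet : (B₁ ∩ B₂).Nonempty)
    (h0 : (0 : EuclideanSpace ℝ (Fin 3)) ∈ interior (W₁ ∩ W₂))
    -- `o₁` is the orthogonal projection of `0` onto `B₁`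
    (o₁ : EuclideanSpace ℝ (Fin 3)) (ho₁ : o₁ ∈ B₁)
    (hperp₁ : ∀ x ∈ B₁, ⟪(0 : EuclideanSpace ℝ (Fin 3)) - o₁, x - o₁⟫ = 0)
    -- the crossed-edge condition
    (hcross : o₁ ∉ interior W₂) (ho₁L : o₁ ∉ B₁ ∩ B₂)
    (q : EuclideanSpace ℝ (Fin 3)) (hq : q ∈ B₁ ∩ B₂)
    (v' : EuclideanSpace ℝ (Fin 3)) (hv' : v' = ‖q - o₁‖⁻¹ • (q - o₁)) :
    (∃ ε > (0 : ℝ), ∀ t ∈ Set.Icc (0 : ℝ) ε, q + t • v' ∈ A₁) ∧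
    ⟪q, v'⟫ = ‖q - o₁‖ ∧ 0 < ‖q - o₁‖ ∧
    (∀ v : EuclideanSpace ℝ (Fin 3), ‖v‖ = 1 → v ≠ v' →
      (∃ ε > (0 : ℝ), ∀ t ∈ Set.Icc (0 : ℝ) ε, q + t • v ∈ A₁ ∪ A₂) →
      ⟪q, v⟫ < ⟪q, v'⟫) :=
  crossed_edge_steepest_ascent_general n₁ n₂ c₁ c₂ hn₁ W₁ W₂ B₁ B₂ A₁ A₂ hW₁ hW₂ hB₁ hB₂ hA₁ hA₂ h0
    o₁ ho₁ hperp₁ hcross ho₁L q hq v' hv'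
end
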